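/- Let μ > 0 and λ be real constants with λ + 2μ > 0. Fix y ∈ ℝ² and define the Kelvin fundamental-solution matrix Φ₀(x,y) := (1/(4π)) [ −((3μ+λ)/(μ(λ+2μ))) ln|x−y| · I + ((λ+μ)/(μ(λ+2μ))) ((x−y)⊗(x−y))/|x−y|² ] for x ≠ y, where I is the 2×2 identity matrix and (a⊗b)_{ij} := a_i b_j. Then for each j ∈ {1,2}, the column vector field x ↦ Φ₀(x,y)e_j satisfies the Lamé equation 𝓛₀(Φ₀(·,y)e_j) := μΔ(Φ₀(·,y)e_j) + (λ+μ)∇(div(Φ₀(·,y)e_j)) = 0 on ℝ² \ {y}. -/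

import Mathlib

/-!
Translate `y` to the origin, and write `gⱼ(v) = vⱼ/‖v‖² = ∂ⱼ log‖v‖` and `ψᵢⱼ = ∂ᵢgⱼ` for the
Hessian of `log‖v‖`. The column `Φ₀eⱼ` is `A log‖v‖ eⱼ + B v gⱼ`. In the plane both `log‖v‖`
and `gⱼ` are harmonic (`tr ψ = 0`), so of `Δ(Φ₀)ᵢⱼ` only the cross term `2B ∇vᵢ·∇gⱼ = 2Bψᵢⱼ`
survives; and since `gⱼ` is homogeneous of degree `-1`, Euler's identity `∑ₖ vₖψₖⱼ = -gⱼ` gives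
`div(Φ₀eⱼ) = (A + B)gⱼ`. Hence `𝓛₀(Φ₀eⱼ)ᵢ = (2μB + (λ+μ)(A+B))ψᵢⱼ`, and the Kelvin constants
`A = -(3μ+λ)/(4πμ(λ+2μ))`, `B = (λ+μ)/(4πμ(λ+2μ))` make the coefficient vanish identically.
-/

noncomputable section

open Real

/-- The Euclidean plane. -/
abbrev E2 : Type := EuclideanSpace ℝ (Fin 2)

/-- Partial derivative `∂ᵢf` (with `i = 0` corresponding to `∂₁`). -/
noncomputable def pd (i : Fin 2) (f : E2 → ℝ) (x : E2) : ℝ :=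
  fderiv ℝ f x (EuclideanSpace.single i 1)

/-- Laplacian of a scalar function. -/
noncomputable def lap (f : E2 → ℝ) (x : E2) : ℝ :=
  pd 0 (pd 0 f) x + pd 1 (pd 1 f) x

/-- Divergence `div u = ∂₁u₁ + ∂₂u₂`. -/
noncomputable def divg (u : E2 → Fin 2 → ℝ) (x : E2) : ℝ :=
  pd 0 (fun y => u y 0) x + pd 1 (fun y => u y 1) x

/-- The Lamé operator `𝓛₀u = μΔu + (λ+μ)∇(div u)`, `i`-th component. -/
noncomputable def lame (μ lam : ℝ) (u : E2 → Fin 2 → ℝ) (x : E2) (i : Fin 2) : ℝ :=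
  μ * lap (fun y => u y i) x + (lam + μ) * pd i (divg u) x

open Filter Topology

section PartialDerivatives

variable {f g : E2 → ℝ} {x : E2}

theorem HasFDerivAt.pd_eq {f' : E2 →L[ℝ] ℝ} (h : HasFDerivAt f f' x) (i : Fin 2) :
    pd i f x = f' (EuclideanSpace.single i 1) := by
  rw [pd, h.fderiv]

theorem Filter.EventuallyEq.pd (h : f =ᶠ[𝓝 x] g) (i : Fin 2) : pd i f =ᶠ[𝓝 x] pd i g :=
  (h.fderiv (𝕜 := ℝ)).mono fun z hz => by simp only [_root_.pd, hz]

theorem pd_eq_of_forall_ne_zero (h : ∀ w ≠ 0, f w = g w) (hx : x ≠ 0) (i : Fin 2) :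
    pd i f x = pd i g x :=
  (Filter.EventuallyEq.pd (f := f) ((eventually_ne_nhds hx).mono h) i).eq_of_nhds

theorem pd_add (i : Fin 2) (hf : DifferentiableAt ℝ f x) (hg : DifferentiableAt ℝ g x) :
    pd i (fun z => f z + g z) x = pd i f x + pd i g x := by
  simp [pd, fderiv_fun_add hf hg]

theorem pd_sub (i : Fin 2) (hf : DifferentiableAt ℝ f x) (hg : DifferentiableAt ℝ g x) :
    pd i (fun z => f z - g z) x = pd i f x - pd i g x := by
  simp [pd, fderiv_fun_sub hf hg]

theorem pd_const_mul (i : Fin 2) (c : ℝ) (hf : DifferentiableAt ℝ f x) :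
    pd i (fun z => c * f z) x = c * pd i f x := by
  simp [pd, fderiv_const_mul hf]

theorem pd_mul (i : Fin 2) (hf : DifferentiableAt ℝ f x) (hg : DifferentiableAt ℝ g x) :
    pd i (fun z => f z * g z) x = pd i f x * g x + f x * pd i g x := by
  simp only [pd, fderiv_fun_mul hf hg, add_apply,
    smul_apply, smul_eq_mul]
  ring

theorem pd_div (i : Fin 2) (hf : DifferentiableAt ℝ f x) (hg : DifferentiableAt ℝ g x)
    (hx : g x ≠ 0) :
    pd i (fun z => f z / g z) x = (pd i f x * g x - f x * pd i g x) / g x ^ 2 := by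
  have hinv : HasFDerivAt (fun z => (g z)⁻¹) ((-(g x ^ 2)⁻¹) • fderiv ℝ g x) x :=
    (hasDerivAt_inv hx).comp_hasFDerivAt x hg.hasFDerivAt
  simp only [div_eq_mul_inv]
  rw [pd_mul i hf hinv.differentiableAt, hinv.pd_eq]
  simp only [pd, smul_apply, smul_eq_mul]
  field_simp
  ring

theorem pd_log (i : Fin 2) (hf : DifferentiableAt ℝ f x) (hx : f x ≠ 0) :
    pd i (fun z => log (f z)) x = pd i f x / f x := by
  rw [(hf.hasFDerivAt.log hx).pd_eq, pd]
  simp [div_eq_inv_mul]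

theorem pd_const (i : Fin 2) (c : ℝ) : pd i (fun _ => c) x = 0 := by
  simp [pd]

theorem pd_coord (i k : Fin 2) : pd i (fun v : E2 => v k) x = if i = k then 1 else 0 := by
  refine ((EuclideanSpace.proj k : E2 →L[ℝ] ℝ).hasFDerivAt.pd_eq i).trans ?_
  simp [eq_comm]

theorem pd_norm_sq (i : Fin 2) : pd i (fun v : E2 => ‖v‖ ^ 2) x = 2 * x i := by
  rw [(hasStrictFDerivAt_norm_sq x).hasFDerivAt.pd_eq]
  simp [EuclideanSpace.inner_single_right]

@[fun_prop] theorem differentiableAt_coord (k : Fin 2) :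
    DifferentiableAt ℝ (fun v : E2 => v k) x :=
  (EuclideanSpace.proj k : E2 →L[ℝ] ℝ).differentiableAt

@[fun_prop] theorem differentiableAt_norm_of_ne_zero (hx : x ≠ 0) :
    DifferentiableAt ℝ (fun v : E2 => ‖v‖) x :=
  differentiableAt_id.norm ℝ hx

end PartialDerivatives

section LameOperator

theorem pd_comp_sub (i : Fin 2) (f : E2 → ℝ) (y : E2) :
    pd i (fun z => f (z - y)) = fun x => pd i f (x - y) := by
  funext x
  simp only [pd, fderiv_comp_sub]

theorem lame_comp_sub (μ lam : ℝ) (u : E2 → Fin 2 → ℝ) (y x : E2) (i : Fin 2) :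
    lame μ lam (fun z => u (z - y)) x i = lame μ lam u (x - y) i := by
  have hdiv : divg (fun z => u (z - y)) = fun x => divg u (x - y) := by
    funext x
    simp only [divg, pd_comp_sub _ (fun w => u w 0) y, pd_comp_sub _ (fun w => u w 1) y]
  simp only [lame, lap, hdiv, pd_comp_sub _ (fun w => u w i) y, pd_comp_sub _ (pd _ _) y,
    pd_comp_sub _ (divg u) y]

theorem lame_congr (μ lam : ℝ) {u w : E2 → Fin 2 → ℝ} {x : E2} (h : u =ᶠ[𝓝 x] w)
    (i : Fin 2) : lame μ lam u x i = lame μ lam w x i := by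
  have hc (k : Fin 2) : (fun z => u z k) =ᶠ[𝓝 x] fun z => w z k :=
    h.mono fun z hz => congrFun hz k
  have hdiv : divg u =ᶠ[𝓝 x] divg w := ((hc 0).pd 0).add ((hc 1).pd 1)
  simp only [lame, lap, (((hc i).pd 0).pd 0).eq_of_nhds, (((hc i).pd 1).pd 1).eq_of_nhds,
    (hdiv.pd i).eq_of_nhds]

end LameOperator

section Kelvin

def kelvinMatrix (A B : ℝ) (v : E2) (i j : Fin 2) : ℝ :=
  A * log ‖v‖ * (if i = j then 1 else 0) + B * (v i * v j / ‖v‖ ^ 2)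

def hessLogNorm (v : E2) (i j : Fin 2) : ℝ :=
  ((if i = j then 1 else 0) - 2 * (v i * v j) / ‖v‖ ^ 2) / ‖v‖ ^ 2

variable {v : E2}

theorem ite_mul_add_ite_mul (c : Fin 2 → ℝ) (i : Fin 2) :
    (if 0 = i then 1 else 0) * c 0 + (if 1 = i then 1 else 0) * c 1 = c i := by
  fin_cases i <;> simp

theorem norm_sq_eq_coord (v : E2) : ‖v‖ ^ 2 = v 0 ^ 2 + v 1 ^ 2 := by
  simp [EuclideanSpace.norm_sq_eq, Fin.sum_univ_two]

theorem hessLogNorm_trace (v : E2) : hessLogNorm v 0 0 + hessLogNorm v 1 1 = 0 := by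
  simp only [hessLogNorm, norm_sq_eq_coord, if_true]
  rcases eq_or_ne (v 0 ^ 2 + v 1 ^ 2) 0 with h | h
  · simp [h]
  · field_simp
    ring

theorem sum_coord_mul_hessLogNorm (v : E2) (j : Fin 2) :
    v 0 * hessLogNorm v 0 j + v 1 * hessLogNorm v 1 j = -(v j / ‖v‖ ^ 2) := by
  rcases eq_or_ne ‖v‖ 0 with h | h
  · simp [hessLogNorm, h]
  calc v 0 * hessLogNorm v 0 j + v 1 * hessLogNorm v 1 j
      = ((if 0 = j then 1 else 0) * v 0 + (if 1 = j then 1 else 0) * v 1) / ‖v‖ ^ 2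
          - 2 * v j * (v 0 ^ 2 + v 1 ^ 2) / (‖v‖ ^ 2) ^ 2 := by
        simp only [hessLogNorm]
        field_simp
        ring
    _ = v j / ‖v‖ ^ 2 - 2 * v j * ‖v‖ ^ 2 / (‖v‖ ^ 2) ^ 2 := by
        rw [ite_mul_add_ite_mul (fun k => v k), norm_sq_eq_coord]
    _ = -(v j / ‖v‖ ^ 2) := by
        field_simp
        ring

theorem pd_log_norm (hv : v ≠ 0) (k : Fin 2) :
    pd k (fun w : E2 => log ‖w‖) v = v k / ‖v‖ ^ 2 := by
  have h : (fun w : E2 => log ‖w‖) = fun w => 2⁻¹ * log (‖w‖ ^ 2) := by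
    funext w
    rw [Real.log_pow]
    ring
  rw [h, pd_const_mul _ _ (by fun_prop (disch := simp [hv])),
    pd_log _ (by fun_prop (disch := assumption)) (by simp [hv]), pd_norm_sq]
  ring

theorem pd_coord_div_norm_sq (hv : v ≠ 0) (k j : Fin 2) :
    pd k (fun w : E2 => w j / ‖w‖ ^ 2) v = hessLogNorm v k j := by
  rw [pd_div _ (by fun_prop) (by fun_prop (disch := assumption)) (by simp [hv]), pd_coord,
    pd_norm_sq, hessLogNorm]
  have : ‖v‖ ≠ 0 := norm_ne_zero_iff.mpr hv
  field_simp

@[fun_prop] theorem differentiableAt_hessLogNorm (hv : v ≠ 0) (i j : Fin 2) :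
    DifferentiableAt ℝ (fun w => hessLogNorm w i j) v := by
  unfold hessLogNorm
  fun_prop (disch := simp [hv])

theorem sum_pd_hessLogNorm (hv : v ≠ 0) (j : Fin 2) :
    pd 0 (fun w => hessLogNorm w 0 j) v + pd 1 (fun w => hessLogNorm w 1 j) v = 0 := by
  simp only [hessLogNorm]
  simp (disch := first | fun_prop (disch := simp [hv]) | simp [hv])
    only [pd_sub, pd_mul, pd_div, pd_coord, pd_norm_sq, pd_const]
  rw [norm_sq_eq_coord]
  have h : v 0 ^ 2 + v 1 ^ 2 ≠ 0 := by rw [← norm_sq_eq_coord]; simp [hv]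
  field_simp
  fin_cases j <;> simp only [Fin.zero_eta, Fin.mk_one, ↓reduceIte, zero_ne_one, one_ne_zero] <;> ring

variable (A B : ℝ)

theorem pd_kelvinMatrix (hv : v ≠ 0) (i j k : Fin 2) :
    pd k (fun w => kelvinMatrix A B w i j) v =
      A * (v k / ‖v‖ ^ 2) * (if i = j then 1 else 0) +
        B * ((if k = i then 1 else 0) * (v j / ‖v‖ ^ 2) + v i * hessLogNorm v k j) := by
  simp only [kelvinMatrix, mul_div_assoc]
  simp (disch := first | fun_prop (disch := simp [hv]) | simp [hv])
    only [pd_add, pd_mul, pd_const, pd_coord, pd_log_norm hv, pd_coord_div_norm_sq hv]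
  ring

theorem lap_kelvinMatrix (hv : v ≠ 0) (i j : Fin 2) :
    lap (fun w => kelvinMatrix A B w i j) v = 2 * B * hessLogNorm v i j := by
  rw [lap, pd_eq_of_forall_ne_zero (fun w hw => pd_kelvinMatrix A B hw i j 0) hv,
    pd_eq_of_forall_ne_zero (fun w hw => pd_kelvinMatrix A B hw i j 1) hv]
  simp (disch := first | fun_prop (disch := simp [hv]) | simp [hv])
    only [pd_add, pd_mul, pd_const, pd_coord, pd_coord_div_norm_sq hv]
  linear_combination A * (if i = j then 1 else 0) * hessLogNorm_trace v +
    B * v i * sum_pd_hessLogNorm hv j + 2 * B * ite_mul_add_ite_mul (hessLogNorm v · j) i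

theorem divg_kelvinMatrix (hv : v ≠ 0) (j : Fin 2) :
    divg (fun w k => kelvinMatrix A B w k j) v = (A + B) * (v j / ‖v‖ ^ 2) := by
  rw [divg, pd_kelvinMatrix A B hv, pd_kelvinMatrix A B hv, if_pos rfl, if_pos rfl]
  linear_combination A * ite_mul_add_ite_mul (fun k => v k / ‖v‖ ^ 2) j +
    B * sum_coord_mul_hessLogNorm v j

theorem lame_kelvinMatrix (μ lam : ℝ) (hv : v ≠ 0) (i j : Fin 2) :
    lame μ lam (fun w k => kelvinMatrix A B w k j) v i =
      (2 * μ * B + (lam + μ) * (A + B)) * hessLogNorm v i j := by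
  rw [lame, lap_kelvinMatrix A B hv,
    pd_eq_of_forall_ne_zero (fun w hw => divg_kelvinMatrix A B hw j) hv,
    pd_const_mul _ _ (by fun_prop (disch := simp [hv])), pd_coord_div_norm_sq hv]
  ring

end Kelvin

open Real in
theorem kelvin_matrix_columns_solve_lame_general
    (μ lam : ℝ)
    (y : E2)
    (Phi : E2 → Fin 2 → Fin 2 → ℝ)
    (hPhi : ∀ x : E2, x ≠ y → ∀ i j : Fin 2,
      Phi x i j = (1 / (4 * π)) *
        (-((3 * μ + lam) / (μ * (lam + 2 * μ))) * Real.log ‖x - y‖ *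
            (if i = j then 1 else 0)
          + ((lam + μ) / (μ * (lam + 2 * μ))) * ((x - y) i * (x - y) j) / ‖x - y‖ ^ 2)) :
    ∀ j : Fin 2, ∀ x : E2, x ≠ y → ∀ i : Fin 2,
      lame μ lam (fun z k => Phi z k j) x i = 0 := by
  intro j x hx i
  set A := 1 / (4 * π) * -((3 * μ + lam) / (μ * (lam + 2 * μ)))
  set B := 1 / (4 * π) * ((lam + μ) / (μ * (lam + 2 * μ)))
  have hPhi_eq : (fun z k => Phi z k j) =ᶠ[𝓝 x] fun z k => kelvinMatrix A B (z - y) k j :=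
    (eventually_ne_nhds hx).mono fun z hz => funext fun k => by
      simp only [hPhi z hz k j, kelvinMatrix, A, B]
      ring
  have hcoeff : 2 * μ * B + (lam + μ) * (A + B) = 0 := by ring
  rw [lame_congr μ lam hPhi_eq, lame_comp_sub μ lam (fun v k => kelvinMatrix A B v k j),
    lame_kelvinMatrix A B μ lam (sub_ne_zero.mpr hx), hcoeff, zero_mul]

open Real in
/-- Each column of the Kelvin fundamental-solution matrix
`Φ₀(x,y) = (1/4π)[−((3μ+λ)/(μ(λ+2μ))) ln|x−y| I + ((λ+μ)/(μ(λ+2μ))) (x−y)⊗(x−y)/|x−y|²]`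
satisfies the Lamé equation `𝓛₀(Φ₀(·,y)eⱼ) = 0` on `ℝ² \ {y}`. -/
theorem kelvin_matrix_columns_solve_lame
    (μ lam : ℝ) (hμ : 0 < μ) (hlam : 0 < lam + 2 * μ)
    (y : E2)
    (Phi : E2 → Fin 2 → Fin 2 → ℝ)
    (hPhi : ∀ x : E2, x ≠ y → ∀ i j : Fin 2,
      Phi x i j = (1 / (4 * π)) *
        (-((3 * μ + lam) / (μ * (lam + 2 * μ))) * Real.log ‖x - y‖ *
            (if i = j then 1 else 0)
          + ((lam + μ) / (μ * (lam + 2 * μ))) * ((x - y) i * (x - y) j) / ‖x - y‖ ^ 2)) :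
    ∀ j : Fin 2, ∀ x : E2, x ≠ y → ∀ i : Fin 2,
      lame μ lam (fun z k => Phi z k j) x i = 0 :=
  kelvin_matrix_columns_solve_lame_general μ lam y Phi hPhi
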